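/- arXiv:math/0612583 — 2 statements merged into one kernel-verified Lean document; each statement's English description precedes it below -/
import Mathlib

section
/- Let z : [0,∞) → ℝ^K be continuous with z_i(t) ≥ 0 for all i and t, with z_i(0) > 0 for every i, and suppose that for every i and every t ≥ 0 with Σ_{j∈V_i} z_j(t) > 0 the coordinate z_i is differentiable at t (from the right if t = 0) with z_i'(t) = λ_i − φ_i(z(t))·exp(−Σ_{j∈V_i} φ_j(z(t))). Then exactly one of the following holds: (i) there exists c > 0 such that z(c) = 0 and z_i(t) > 0 for all i and all t ∈ (0,c); or (ii) z_i(t) > 0 for all i and all t > 0. -/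
open Finset

/-- The closed neighbourhood `V_i = {i} ∪ {j : (i,j) ∈ E}` of a vertex `i`. -/
def closedNbhd {K : ℕ} (G : SimpleGraph (Fin K)) [DecidableRel G.Adj] (i : Fin K) :
    Finset (Fin K) :=
  insert i (G.neighborFinset i)

/-- `φ_i(x) = x_i / ∑_{j ∈ V_i} x_j`. -/
noncomputable def phi {K : ℕ} (G : SimpleGraph (Fin K)) [DecidableRel G.Adj]
    (x : Fin K → ℝ) (i : Fin K) : ℝ :=
  x i / ∑ j ∈ closedNbhd G i, x j

/-- `phi` is nonnegative for nonnegative vectors. -/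
lemma phi_nonneg {K : ℕ} (G : SimpleGraph (Fin K)) [DecidableRel G.Adj]
    {x : Fin K → ℝ} (hx : ∀ i, 0 ≤ x i) (i : Fin K) : 0 ≤ phi G x i :=
  div_nonneg (hx i) (Finset.sum_nonneg fun j _ => hx j)

/-- Key analytic lemma: at a zero of the coordinate `i` at a positive time, the whole
closed-neighbourhood sum must vanish. -/
lemma sum_closedNbhd_eq_zero {K : ℕ} (G : SimpleGraph (Fin K)) [DecidableRel G.Adj]
    (lam : Fin K → ℝ) (hlam : ∀ i, 0 < lam i)
    (z : ℝ → Fin K → ℝ)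
    (hcont : ContinuousOn (fun t => z t) (Set.Ici 0))
    (hnn : ∀ i, ∀ t : ℝ, 0 ≤ t → 0 ≤ z t i)
    (hderiv : ∀ i, ∀ t : ℝ, 0 ≤ t → 0 < ∑ j ∈ closedNbhd G i, z t j →
      HasDerivWithinAt (fun s => z s i)
        (lam i - phi G (z t) i * Real.exp (-∑ j ∈ closedNbhd G i, phi G (z t) j))
        (Set.Ici 0) t)
    {c : ℝ} (hc : 0 < c) {i : Fin K} (hzi : z c i = 0) :
    ∑ j ∈ closedNbhd G i, z c j = 0 := by
  by_contra hS0
  have hSnn : 0 ≤ ∑ j ∈ closedNbhd G i, z c j :=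
    Finset.sum_nonneg fun j _ => hnn j c hc.le
  have hS : 0 < ∑ j ∈ closedNbhd G i, z c j := lt_of_le_of_ne hSnn (Ne.symm hS0)
  set S : ℝ := ∑ j ∈ closedNbhd G i, z c j with hSdef
  set L : ℝ := lam i with hLdef
  have hL : 0 < L := hlam i
  -- coordinate continuity
  have hcoord : ∀ j, ContinuousOn (fun t => z t j) (Set.Ici 0) := fun j =>
    (continuous_apply j).comp_continuousOn hcont
  have hg : ContinuousOn (fun t => ∑ j ∈ closedNbhd G i, z t j) (Set.Ici 0) :=
    continuousOn_finset_sum _ fun j _ => hcoord j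
  have hIci : Set.Ici (0:ℝ) ∈ nhds c := Ici_mem_nhds hc
  have hnw : nhdsWithin c (Set.Ici (0:ℝ)) = nhds c := nhdsWithin_eq_nhds.2 hIci
  have hgc : Filter.Tendsto (fun t => ∑ j ∈ closedNbhd G i, z t j) (nhds c) (nhds S) := by
    have := (hg c (Set.mem_Ici.2 hc.le)).tendsto
    rwa [hnw] at this
  have hic : Filter.Tendsto (fun t => z t i) (nhds c) (nhds 0) := by
    have := (hcoord i c (Set.mem_Ici.2 hc.le)).tendsto
    rwa [hnw, hzi] at this
  have h1 : ∀ᶠ t in nhds c, S / 2 < ∑ j ∈ closedNbhd G i, z t j :=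
    hgc.eventually (lt_mem_nhds (by linarith))
  have h2 : ∀ᶠ t in nhds c, z t i < L * S / 4 :=
    hic.eventually (gt_mem_nhds (by positivity))
  obtain ⟨δ, hδ, hball⟩ := Metric.eventually_nhds_iff.1 (h1.and h2)
  set a : ℝ := max (c / 2) (c - δ / 2) with hadef
  have ha0 : 0 < a := lt_of_lt_of_le (by linarith) (le_max_left _ _)
  have hac : a < c := max_lt (by linarith) (by linarith)
  have hmem : ∀ t ∈ Set.Icc a c,
      S / 2 < ∑ j ∈ closedNbhd G i, z t j ∧ z t i < L * S / 4 := by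
    intro t ht
    apply hball
    rw [Real.dist_eq, abs_sub_lt_iff]
    constructor
    · linarith [ht.2]
    · have : c - δ / 2 ≤ a := le_max_right _ _
      linarith [ht.1]
  have hsub : Set.Icc a c ⊆ Set.Ici (0:ℝ) := fun t ht => le_trans ha0.le ht.1
  -- the auxiliary function
  set w : ℝ → ℝ := fun t => z t i - L / 4 * t with hwdef
  have hwmono : StrictMonoOn w (Set.Icc a c) := by
    apply strictMonoOn_of_hasDerivWithinAt_pos (convex_Icc a c)
      (f' := fun t => (L - phi G (z t) i *
        Real.exp (-∑ j ∈ closedNbhd G i, phi G (z t) j)) - L / 4)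
    · exact ((hcoord i).mono hsub).sub (continuous_const.mul continuous_id).continuousOn
    · intro x hx
      rw [interior_Icc] at hx ⊢
      have hx0 : 0 ≤ x := le_trans ha0.le hx.1.le
      have hxS : 0 < ∑ j ∈ closedNbhd G i, z x j := by
        have := (hmem x ⟨hx.1.le, hx.2.le⟩).1
        linarith
      have hd := (hderiv i x hx0 hxS).mono (fun t (ht : t ∈ Set.Ioo a c) => hsub ⟨ht.1.le, ht.2.le⟩)
      have hlin : HasDerivWithinAt (fun t : ℝ => L / 4 * t) (L / 4) (Set.Ioo a c) x := by
        simpa using ((hasDerivAt_id x).const_mul (L / 4)).hasDerivWithinAt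
      exact hd.sub hlin
    · intro x hx
      rw [interior_Icc] at hx
      have hx0 : 0 ≤ x := le_trans ha0.le hx.1.le
      obtain ⟨hxS, hxi⟩ := hmem x ⟨hx.1.le, hx.2.le⟩
      have hznn : ∀ j, 0 ≤ z x j := fun j => hnn j x hx0
      have hphinn : 0 ≤ phi G (z x) i := phi_nonneg G hznn i
      have hexp : Real.exp (-∑ j ∈ closedNbhd G i, phi G (z x) j) ≤ 1 := by
        rw [Real.exp_le_one_iff, neg_nonpos]
        exact Finset.sum_nonneg fun j _ => phi_nonneg G hznn j
      have hphile : phi G (z x) i ≤ L / 2 := by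
        have hgt : (0:ℝ) < S / 2 := by linarith
        have hle : phi G (z x) i ≤ (L * S / 4) / (S / 2) := by
          unfold phi
          exact div_le_div₀ (by positivity) hxi.le hgt hxS.le
        have heq : (L * S / 4) / (S / 2) = L / 2 := by
          field_simp
          ring
        linarith [hle, heq ▸ hle]
      have hmul : phi G (z x) i *
          Real.exp (-∑ j ∈ closedNbhd G i, phi G (z x) j) ≤ phi G (z x) i :=
        mul_le_of_le_one_right hphinn hexp
      linarith
  have hlt := hwmono ⟨le_refl a, hac.le⟩ ⟨hac.le, le_refl c⟩ hac
  have hza : 0 ≤ z a i := hnn i a ha0.le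
  simp only [hwdef, hzi] at hlt
  nlinarith

/-- If `z : [0,∞) → ℝ^K` is continuous with nonnegative coordinates, strictly positive at
`0`, and satisfies the fluid differential equation whenever `∑_{j∈V_i} z_j(t) > 0`, then
exactly one of the following holds: (i) there is `c > 0` with `z(c) = 0` and `z(t)` in the
open positive orthant for `t ∈ (0,c)`; or (ii) `z(t)` is in the open positive orthant for
all `t > 0`. -/
theorem stmt7 {K : ℕ} (G : SimpleGraph (Fin K)) [DecidableRel G.Adj]
    (hconn : G.Connected) (lam : Fin K → ℝ) (hlam : ∀ i, 0 < lam i)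
    (z : ℝ → Fin K → ℝ)
    (hcont : ContinuousOn (fun t => z t) (Set.Ici 0))
    (hnn : ∀ i, ∀ t : ℝ, 0 ≤ t → 0 ≤ z t i)
    (h0 : ∀ i, 0 < z 0 i)
    (hderiv : ∀ i, ∀ t : ℝ, 0 ≤ t → 0 < ∑ j ∈ closedNbhd G i, z t j →
      HasDerivWithinAt (fun s => z s i)
        (lam i - phi G (z t) i * Real.exp (-∑ j ∈ closedNbhd G i, phi G (z t) j))
        (Set.Ici 0) t) :
    Xor' (∃ c : ℝ, 0 < c ∧ (∀ i, z c i = 0) ∧ ∀ t ∈ Set.Ioo 0 c, ∀ i, 0 < z t i)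
      (∀ t : ℝ, 0 < t → ∀ i, 0 < z t i) := by
  have hne : Nonempty (Fin K) := hconn.nonempty
  by_cases hB : ∀ t : ℝ, 0 < t → ∀ i, 0 < z t i
  · refine Or.inr ⟨hB, ?_⟩
    rintro ⟨c, hc, hzc, -⟩
    obtain ⟨i⟩ := hne
    exact absurd (hzc i) (hB c hc i).ne'
  · refine Or.inl ⟨?_, hB⟩
    push_neg at hB
    obtain ⟨t₀, ht₀, i₀, hzi₀⟩ := hB
    -- the zero set
    set Z : Set ℝ := {t | 0 ≤ t ∧ ∃ i, z t i = 0} with hZdef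
    have hZne : Z.Nonempty := ⟨t₀, ht₀.le, i₀, le_antisymm hzi₀ (hnn i₀ t₀ ht₀.le)⟩
    have hZbdd : BddBelow Z := ⟨0, fun t ht => ht.1⟩
    have hcoord : ∀ j, ContinuousOn (fun t => z t j) (Set.Ici 0) := fun j =>
      (continuous_apply j).comp_continuousOn hcont
    have hZclosed : IsClosed Z := by
      have : Z = ⋃ i : Fin K, (Set.Ici 0 ∩ (fun t => z t i) ⁻¹' {0}) := by
        ext t
        simp only [hZdef, Set.mem_setOf_eq, Set.mem_iUnion, Set.mem_inter_iff,
          Set.mem_preimage, Set.mem_singleton_iff, Set.mem_Ici]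
        constructor
        · rintro ⟨h1, i, h2⟩; exact ⟨i, h1, h2⟩
        · rintro ⟨i, h1, h2⟩; exact ⟨h1, i, h2⟩
      rw [this]
      exact isClosed_iUnion_of_finite fun i =>
        (hcoord i).preimage_isClosed_of_isClosed isClosed_Ici isClosed_singleton
    set c : ℝ := sInf Z with hcdef
    have hcZ : c ∈ Z := hZclosed.csInf_mem hZne hZbdd
    obtain ⟨hc0, i₁, hzi₁⟩ := hcZ
    have hc : 0 < c := by
      rcases lt_or_eq_of_le hc0 with h | h
      · exact h
      · exact absurd (h ▸ hzi₁) (h0 i₁).ne'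
    -- propagate zeros via connectivity
    have hstep : ∀ i : Fin K, z c i = 0 → ∀ j ∈ closedNbhd G i, z c j = 0 := by
      intro i hi j hj
      have hsum := sum_closedNbhd_eq_zero G lam hlam z hcont hnn hderiv hc hi
      exact (Finset.sum_eq_zero_iff_of_nonneg fun k _ => hnn k c hc.le).1 hsum j hj
    have hall : ∀ j, z c j = 0 := by
      intro j
      have hreach : G.Reachable i₁ j := hconn i₁ j
      obtain ⟨p⟩ := hreach
      clear hzi₀
      induction p with
      | nil => exact hzi₁
      | @cons u v w huv p ih =>
        -- need z c u = 0 → z c v = 0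
        -- restructure: we prove by generalizing
        exact ih (hstep u hzi₁ v (by
          simp only [closedNbhd, Finset.mem_insert, SimpleGraph.mem_neighborFinset]
          exact Or.inr huv))
    refine ⟨c, hc, hall, ?_⟩
    intro t ht i
    have htZ : t ∉ Z := fun h => absurd (csInf_le hZbdd h) (not_le.2 ht.2)
    have : z t i ≠ 0 := fun h => htZ ⟨ht.1.le, i, h⟩
    exact lt_of_le_of_ne (hnn i t ht.1.le) (Ne.symm this)
end

section
/- There exists a constant C > 0, depending only on the graph 𝒢, such that for every x ∈ ℕ^K and every vertex i with x_i ≥ 2, one has |G_i(x) − G̃_i(x)| ≤ min(1, C/x_i). -/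
open Finset

/-- `G̃_i(x) = φ_i(x) exp(−∑_{j∈V_i} φ_j(x))`. -/
noncomputable def Gtil {K : ℕ} (G : SimpleGraph (Fin K)) [DecidableRel G.Adj]
    (x : Fin K → ℝ) (i : Fin K) : ℝ :=
  phi G x i * Real.exp (-∑ j ∈ closedNbhd G i, phi G x j)

/-- The success probability
`G_i(x) = (x_i/∑_{k∈V_i} x_k)·(1 − 1/∑_{k∈V_i} x_k)^{x_i−1}·∏_{j∈V_i∖{i}} (1 − 1/∑_{k∈V_j} x_k)^{x_j}`
for `x_i > 0`, and `G_i(x) = 0` for `x_i = 0`. -/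
noncomputable def Gfun {K : ℕ} (G : SimpleGraph (Fin K)) [DecidableRel G.Adj]
    (x : Fin K → ℕ) (i : Fin K) : ℝ :=
  if x i = 0 then 0
  else
    ((x i : ℝ) / ∑ k ∈ closedNbhd G i, (x k : ℝ)) *
      (1 - 1 / ∑ k ∈ closedNbhd G i, (x k : ℝ)) ^ (x i - 1) *
      ∏ j ∈ (closedNbhd G i).erase i, (1 - 1 / ∑ k ∈ closedNbhd G j, (x k : ℝ)) ^ (x j)

/-!
Write `s_j = ∑_{k ∈ V_j} x_k`. Both `G_i(x)` and `G̃_i(x)` are `φ_i(x) ∈ [0, 1]` times a product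
over `j ∈ V_i` of factors in `[0, 1]`, namely `(1 - 1/s_j)^{m_j}` with `m_j = x_j` for `j ≠ i` and
`m_i = x_i - 1`, resp. `exp(-x_j/s_j)`. Since `i ∈ V_j`, every `s_j ≥ x_i ≥ 2`; writing
`(1 - t)^m = exp(m log(1 - t))` with `log(1 - t) = -t + O(t²)` and `t = 1/s_j` shows that
corresponding factors differ by at most `3/s_j ≤ 3/x_i`. Products of numbers in `[0, 1]` differ by
at most the sum of the differences of their factors, so `|G_i - G̃_i| ≤ 3|V_i|/x_i ≤ 3K/x_i`.
-/

namespace Real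

lemma abs_exp_sub_exp_le_of_nonpos {a b : ℝ} (ha : a ≤ 0) (hb : b ≤ 0) :
    |exp a - exp b| ≤ |a - b| := by
  wlog hab : a ≤ b generalizing a b
  · rw [abs_sub_comm, abs_sub_comm a]
    exact this hb ha (le_of_not_ge hab)
  rw [abs_sub_comm, abs_of_nonneg (sub_nonneg.2 (exp_le_exp.2 hab)), abs_sub_comm,
    abs_of_nonneg (sub_nonneg.2 hab)]
  have hexp : 1 - exp (a - b) ≤ b - a := by linarith [add_one_le_exp (a - b)]
  have hexp_nonneg : 0 ≤ 1 - exp (a - b) := sub_nonneg.2 (exp_le_one_iff.2 (by linarith))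
  calc exp b - exp a = exp b * (1 - exp (a - b)) := by
        rw [mul_sub, mul_one, ← exp_add, add_sub_cancel]
    _ ≤ 1 * (b - a) := mul_le_mul (exp_le_one_iff.2 hb) hexp hexp_nonneg zero_le_one
    _ = b - a := one_mul _

lemma neg_sub_two_mul_sq_le_log_one_sub {t : ℝ} (h2 : t ≤ 1 / 2) :
    -t - 2 * t ^ 2 ≤ log (1 - t) := by
  have hpos : 0 < 1 - t := by linarith
  have hdiv : t / (1 - t) ≤ t + 2 * t ^ 2 := by
    rw [div_le_iff₀ hpos]
    nlinarith
  have hinv : 1 - (1 - t)⁻¹ = -(t / (1 - t)) := by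
    field_simp
    ring
  linarith [one_sub_inv_le_log_of_pos hpos]

lemma abs_one_sub_pow_sub_exp_le {t n : ℝ} {m : ℕ} (h0 : 0 ≤ t) (h2 : t ≤ 1 / 2)
    (hmn : m ≤ n) (hnt : n * t ≤ 1) :
    |(1 - t) ^ m - exp (-(n * t))| ≤ (2 + n - m) * t := by
  have hpos : 0 < 1 - t := by linarith
  have hlog_le : log (1 - t) ≤ -t := by linarith [log_le_sub_one_of_pos hpos]
  have hlog_ge := neg_sub_two_mul_sq_le_log_one_sub h2
  have hm : (0 : ℝ) ≤ m := m.cast_nonneg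
  rw [← exp_log (pow_pos hpos m), log_pow]
  refine (abs_exp_sub_exp_le_of_nonpos
    (mul_nonpos_of_nonneg_of_nonpos hm (by linarith)) (by nlinarith)).trans ?_
  rw [abs_le]
  constructor <;> nlinarith

end Real

lemma abs_prod_sub_prod_le_sum_abs_sub {ι : Type*} (s : Finset ι) {f g : ι → ℝ}
    (hf : ∀ j ∈ s, |f j| ≤ 1) (hg : ∀ j ∈ s, |g j| ≤ 1) :
    |∏ j ∈ s, f j - ∏ j ∈ s, g j| ≤ ∑ j ∈ s, |f j - g j| := by
  classical
  induction s using Finset.induction_on with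
  | empty => simp
  | insert a s ha ih =>
    rw [forall_mem_insert] at hf hg
    rw [prod_insert ha, prod_insert ha, sum_insert ha]
    have hprod_g : |∏ j ∈ s, g j| ≤ 1 := by
      rw [abs_prod]
      exact prod_le_one (fun _ _ => abs_nonneg _) hg.2
    calc |f a * ∏ j ∈ s, f j - g a * ∏ j ∈ s, g j|
        = |f a * (∏ j ∈ s, f j - ∏ j ∈ s, g j) + (f a - g a) * ∏ j ∈ s, g j| := by
          ring_nf
      _ ≤ |f a| * |∏ j ∈ s, f j - ∏ j ∈ s, g j| + |f a - g a| * |∏ j ∈ s, g j| := by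
        rw [← abs_mul, ← abs_mul]
        exact abs_add_le _ _
      _ ≤ 1 * ∑ j ∈ s, |f j - g j| + |f a - g a| * 1 :=
        add_le_add (mul_le_mul hf.1 (ih hf.2 hg.2) (abs_nonneg _) zero_le_one)
          (mul_le_mul_of_nonneg_left hprod_g (abs_nonneg _))
      _ = |f a - g a| + ∑ j ∈ s, |f j - g j| := by ring

lemma abs_mul_prod_sub_mul_prod_le_min {ι : Type*} (s : Finset ι) {c ε : ℝ} {f g : ι → ℝ}
    (hc : c ∈ Set.Icc 0 1) (hf : ∀ j ∈ s, f j ∈ Set.Icc 0 1)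
    (hg : ∀ j ∈ s, g j ∈ Set.Icc 0 1)
    (hfg : ∀ j ∈ s, |f j - g j| ≤ ε) :
    |c * ∏ j ∈ s, f j - c * ∏ j ∈ s, g j| ≤ min 1 (#s * ε) := by
  have hprod_mem : ∀ {h : ι → ℝ}, (∀ j ∈ s, h j ∈ Set.Icc 0 1) →
      ∏ j ∈ s, h j ∈ Set.Icc 0 1 := fun hh =>
    ⟨prod_nonneg fun j hj => (hh j hj).1,
      prod_le_one (fun j hj => (hh j hj).1) fun j hj => (hh j hj).2⟩
  have habs : ∀ {h : ι → ℝ}, (∀ j ∈ s, h j ∈ Set.Icc 0 1) → ∀ j ∈ s, |h j| ≤ 1 :=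
    fun hh j hj => abs_le.2 ⟨by linarith [(hh j hj).1], (hh j hj).2⟩
  have hsum : |∏ j ∈ s, f j - ∏ j ∈ s, g j| ≤ #s * ε :=
    calc _ ≤ ∑ j ∈ s, |f j - g j| := abs_prod_sub_prod_le_sum_abs_sub s (habs hf) (habs hg)
      _ ≤ #s • ε := sum_le_card_nsmul _ _ _ hfg
      _ = #s * ε := nsmul_eq_mul _ _
  have hone : |∏ j ∈ s, f j - ∏ j ∈ s, g j| ≤ 1 :=
    abs_sub_le_of_nonneg_of_le (hprod_mem hf).1 (hprod_mem hf).2 (hprod_mem hg).1 (hprod_mem hg).2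
  rw [← mul_sub, abs_mul, abs_of_nonneg hc.1]
  exact le_min (mul_le_one₀ hc.2 (abs_nonneg _) hone)
    ((mul_le_of_le_one_left (abs_nonneg _) hc.2).trans hsum)

section Graph

open Real

variable {K : ℕ} (G : SimpleGraph (Fin K)) [DecidableRel G.Adj]

noncomputable def nbhdSum (x : Fin K → ℝ) (j : Fin K) : ℝ :=
  ∑ k ∈ closedNbhd G j, x k

lemma mem_closedNbhd_self (i : Fin K) : i ∈ closedNbhd G i :=
  mem_insert_self i _

lemma mem_closedNbhd_comm {i j : Fin K} : j ∈ closedNbhd G i ↔ i ∈ closedNbhd G j := by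
  simp only [closedNbhd, mem_insert, SimpleGraph.mem_neighborFinset, eq_comm,
    SimpleGraph.adj_comm]

lemma le_nbhdSum {x : Fin K → ℝ} (hx : 0 ≤ x) {i j : Fin K} (hj : j ∈ closedNbhd G i) :
    x i ≤ nbhdSum G x j :=
  single_le_sum (fun k _ => hx k) ((mem_closedNbhd_comm G).1 hj)

lemma Gfun_eq_mul_prod (x : Fin K → ℕ) {i : Fin K} (hi : x i ≠ 0) :
    Gfun G x i = x i / nbhdSum G (fun k => (x k : ℝ)) i *
      ∏ j ∈ closedNbhd G i,
        (1 - 1 / nbhdSum G (fun k => (x k : ℝ)) j) ^ Function.update x i (x i - 1) j := by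
  rw [Gfun, if_neg hi, ← mul_prod_erase _ _ (mem_closedNbhd_self G i), Function.update_self,
    mul_assoc]
  congr 2
  exact prod_congr rfl fun j hj => by rw [Function.update_of_ne (ne_of_mem_erase hj)]; rfl

lemma Gtil_eq_mul_prod (x : Fin K → ℝ) (i : Fin K) :
    Gtil G x i = x i / nbhdSum G x i * ∏ j ∈ closedNbhd G i, exp (-(x j / nbhdSum G x j)) := by
  rw [Gtil, ← sum_neg_distrib, exp_sum]
  rfl

lemma abs_pow_sub_exp_nbhdSum_le (x : Fin K → ℕ) {i j : Fin K} (hi : 2 ≤ x i)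
    (hj : j ∈ closedNbhd G i) :
    |(1 - 1 / nbhdSum G (fun k => (x k : ℝ)) j) ^ Function.update x i (x i - 1) j
      - exp (-(x j / nbhdSum G (fun k => (x k : ℝ)) j))| ≤ 3 / x i := by
  set s := nbhdSum G (fun k => (x k : ℝ)) j
  set m := Function.update x i (x i - 1) j
  have hx : 0 ≤ fun k => (x k : ℝ) := fun k => (x k).cast_nonneg
  have hxi : (2 : ℝ) ≤ x i := by exact_mod_cast hi
  have hxi_le : (x i : ℝ) ≤ s := le_nbhdSum G hx hj
  have hxj_le : (x j : ℝ) ≤ s := le_nbhdSum G hx (mem_closedNbhd_self G j)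
  have hs : 0 < s := by linarith
  have ht : 1 / s ≤ 1 / x i := one_div_le_one_div_of_le (by linarith) hxi_le
  have ht_half : 1 / s ≤ 1 / 2 := one_div_le_one_div_of_le two_pos (hxi.trans hxi_le)
  have hm : (m : ℝ) ≤ x j ∧ (x j : ℝ) - m ≤ 1 := by
    rcases eq_or_ne j i with rfl | hji
    · simp only [m, Function.update_self, Nat.cast_sub (by omega : 1 ≤ x j)]
      norm_num
    · simp [m, Function.update_of_ne hji]
  have hnt : (x j : ℝ) * (1 / s) ≤ 1 := by
    rw [mul_one_div]
    exact div_le_one_of_le₀ hxj_le hs.le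
  rw [div_eq_mul_one_div (x j : ℝ)]
  calc _ ≤ (2 + x j - m) * (1 / s) := abs_one_sub_pow_sub_exp_le (by positivity) ht_half hm.1 hnt
    _ ≤ 3 * (1 / x i) := mul_le_mul (by linarith) ht (by positivity) (by norm_num)
    _ = 3 / x i := mul_one_div _ _

lemma abs_Gfun_sub_Gtil_le (x : Fin K → ℕ) {i : Fin K} (hi : 2 ≤ x i) :
    |Gfun G x i - Gtil G (fun k => (x k : ℝ)) i| ≤
      min 1 (#(closedNbhd G i) * (3 / (x i : ℝ))) := by
  rw [Gfun_eq_mul_prod G x (by omega), Gtil_eq_mul_prod]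
  set y : Fin K → ℝ := fun k => (x k : ℝ)
  have hy : 0 ≤ y := fun k => (x k).cast_nonneg
  have hs : ∀ j ∈ closedNbhd G i, 2 ≤ nbhdSum G y j := fun j hj =>
    le_trans (by exact_mod_cast hi : (2 : ℝ) ≤ x i) (le_nbhdSum G hy hj)
  refine abs_mul_prod_sub_mul_prod_le_min _ ?_ (fun j hj => ?_) (fun j hj => ?_)
    (fun j hj => abs_pow_sub_exp_nbhdSum_le G x hi hj)
  · have hs_i := hs i (mem_closedNbhd_self G i)
    exact ⟨div_nonneg (hy i) (by linarith),
      div_le_one_of_le₀ (le_nbhdSum G hy (mem_closedNbhd_self G i)) (by linarith)⟩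
  · have hs_j := hs j hj
    have ht0 : 0 < 1 / nbhdSum G y j := one_div_pos.2 (by linarith)
    have ht1 : 1 / nbhdSum G y j ≤ 1 := (div_le_one (by linarith)).2 (by linarith)
    exact ⟨pow_nonneg (by linarith) _, pow_le_one₀ (by linarith) (by linarith)⟩
  · exact ⟨(exp_pos _).le,
      exp_le_one_iff.2 (neg_nonpos.2 (div_nonneg (hy j) (by linarith [hs j hj])))⟩

end Graph

/-- There is a constant `C > 0`, depending only on the graph, such that
`|G_i(x) − G̃_i(x)| ≤ min(1, C/x_i)` whenever `x_i ≥ 2`. -/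
theorem stmt9 {K : ℕ} (G : SimpleGraph (Fin K)) [DecidableRel G.Adj] :
    ∃ C : ℝ, 0 < C ∧ ∀ x : Fin K → ℕ, ∀ i : Fin K, 2 ≤ x i →
      |Gfun G x i - Gtil G (fun k => (x k : ℝ)) i| ≤ min 1 (C / (x i : ℝ)) := by
  refine ⟨3 * (K + 1), by positivity, fun x i hi => (abs_Gfun_sub_Gtil_le G x hi).trans ?_⟩
  have hcard : (#(closedNbhd G i) : ℝ) ≤ K := by
    exact_mod_cast (card_le_univ _).trans_eq (Fintype.card_fin K)
  refine min_le_min_left _ ?_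
  rw [mul_div_assoc']
  exact div_le_div_of_nonneg_right (by linarith) (by positivity)
end
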